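/- Let s, t, a be integers with s < a < t and a ≥ 0. Every M ∈ I^a can be factored as M = U·N, where U is the matrix with rows (1, i, 0), (0, 1, 0), (y, z, 1) for some i ∈ 𝒫^{-a}/𝒫^{-s}, y ∈ 𝒫^{a+1}/𝒫^{t}, z ∈ 𝒫/𝒫^{t-s}, and N lies in I^a ∩ x_{(s,t)}·GL_3(𝒪)·x_{(s,t)}^{-1}. -/

import Mathlib

noncomputable section

/-- The element π of F = K((π)). -/
def pp (K : Type*) [Field K] : LaurentSeries K := HahnSeries.single (1 : ℤ) (1 : K)

/-- The π-adic valuation on F = K((π)), with v(0) = ⊤. -/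
def vv {K : Type*} [Field K] (x : LaurentSeries K) : WithTop ℤ := x.orderTop

/-- x ∈ 𝒫^r, i.e. v(x) ≥ r. -/
def inP {K : Type*} [Field K] (r : ℤ) (x : LaurentSeries K) : Prop := (r : WithTop ℤ) ≤ vv x

/-- x ∈ 𝒫^r/𝒫^{r'} : x is a polynomial x_r π^r + ⋯ + x_{r'-1} π^{r'-1} (possibly 0). -/
def inPQ {K : Type*} [Field K] (r r' : ℤ) (x : LaurentSeries K) : Prop :=
  inP r x ∧ ∀ i : ℤ, r' ≤ i → x.coeff i = 0

/-- Membership in GL₃(𝒪): entries in 𝒪 and determinant a unit of 𝒪. -/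
def inGLO {K : Type*} [Field K] (C : Matrix (Fin 3) (Fin 3) (LaurentSeries K)) : Prop :=
  (∀ i j, inP 0 (C i j)) ∧ vv C.det = 0

/-- The matrix x_{(s,t)} = diag(1, π^s, π^t). -/
def xst (K : Type*) [Field K] (s t : ℤ) : Matrix (Fin 3) (Fin 3) (LaurentSeries K) :=
  Matrix.diagonal ![1, pp K ^ s, pp K ^ t]

/-- Membership in the subgroup I^a of GL₃(F). -/
def inIa {K : Type*} [Field K] (a : ℤ) (g : Matrix (Fin 3) (Fin 3) (LaurentSeries K)) : Prop :=
  g.det ≠ 0 ∧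
  vv (g 0 0) = 0 ∧ vv (g 1 1) = 0 ∧ vv (g 2 2) = 0 ∧
  inP (-a) (g 0 1) ∧ inP (-a) (g 0 2) ∧ inP 0 (g 1 2) ∧
  inP (a + 1) (g 1 0) ∧ inP (a + 1) (g 2 0) ∧ inP 1 (g 2 1)

/-- Membership in x_{(s,t)}·GL₃(𝒪)·x_{(s,t)}⁻¹. -/
def inConj {K : Type*} [Field K] (s t : ℤ) (g : Matrix (Fin 3) (Fin 3) (LaurentSeries K)) : Prop :=
  ∃ C, inGLO C ∧ g = xst K s t * C * (xst K s t)⁻¹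

/-- M represents a γ-fixed point at the vertex (s,t): there is C ∈ GL₃(𝒪) with
γ·M·x_{(s,t)} = M·x_{(s,t)}·C. -/
def reprFixed {K : Type*} [Field K] (γ M : Matrix (Fin 3) (Fin 3) (LaurentSeries K))
    (s t : ℤ) : Prop :=
  ∃ C, inGLO C ∧ γ * (M * xst K s t) = M * xst K s t * C

/-!
Subtracting `i` times row 1 from row 0, where `i` is the quotient `M₀₁ / M₁₁` truncated below
`π^{-s}`, puts the (0,1) entry into `𝒫^{-s}`. The upper left 2×2 block is still invertible over
`𝒪`, so by Cramer's rule `(M₂₀, M₂₁) = y₀·(M₀₀, M₀₁) + z₀·(M₁₀, M₁₁)` exactly; subtracting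
`y·(row 0) + z·(row 1)`, with `y`, `z` the truncations of `y₀`, `z₀` below `π^t`, `π^{t-s}`, leaves
the entries (2,0), (2,1) in `𝒫^t`, `𝒫^{t-s}`. The three row operations are transvections in `I^a`
whose product is `U`, and the resulting `N` satisfies `v(N_{pq}) ≥ e_p - e_q` for `e = (0, s, t)`,
which says that `x_{(s,t)}⁻¹ N x_{(s,t)}` is integral.
-/

section

open Matrix

variable {K : Type*} [Field K] {r r' : ℤ} {x y u : LaurentSeries K}

theorem inP.mono (hx : inP r x) (h : r' ≤ r) : inP r' x :=
  le_trans (WithTop.coe_le_coe.mpr h) hx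

theorem inP.add (hx : inP r x) (hy : inP r y) : inP r (x + y) :=
  le_trans (le_min hx hy) HahnSeries.min_orderTop_le_orderTop_add

theorem inP.neg (hx : inP r x) : inP r (-x) := by
  rwa [inP, vv, HahnSeries.orderTop_neg]

theorem inP.sub (hx : inP r x) (hy : inP r y) : inP r (x - y) := by
  rw [sub_eq_add_neg]
  exact hx.add hy.neg

theorem vv_mul (x y : LaurentSeries K) : vv (x * y) = vv x + vv y :=
  HahnSeries.orderTop_mul x y

theorem inP.mul (hx : inP r x) (hy : inP r' y) : inP (r + r') (x * y) := by
  rw [inP, vv_mul, WithTop.coe_add]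
  exact add_le_add hx hy

theorem inP_zero_of_vv_eq_zero (hx : vv x = 0) : inP 0 x := hx.symm.le

theorem vv_mul_eq_zero (hx : vv x = 0) (hy : vv y = 0) : vv (x * y) = 0 := by
  rw [vv_mul, hx, hy, add_zero]

theorem vv_add_eq_zero (hx : vv x = 0) (hy : inP 1 y) : vv (x + y) = 0 := by
  rw [vv, HahnSeries.orderTop_add_eq_left] <;> rw [← vv, hx]
  exact lt_of_lt_of_le (WithTop.coe_lt_coe.mpr one_pos) hy

theorem vv_sub_eq_zero (hx : vv x = 0) (hy : inP 1 y) : vv (x - y) = 0 := by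
  rw [sub_eq_add_neg]
  exact vv_add_eq_zero hx hy.neg

theorem vv_one : vv (1 : LaurentSeries K) = 0 := HahnSeries.orderTop_one

theorem vv_inv_eq_zero (hx : vv x = 0) : vv x⁻¹ = 0 := by
  have hx₀ : x ≠ 0 := by
    rintro rfl
    simp [vv] at hx
  have h := vv_mul x x⁻¹
  rwa [mul_inv_cancel₀ hx₀, vv_one, hx, zero_add, eq_comm] at h

theorem vv_pp_zpow (k : ℤ) : vv (pp K ^ k) = k := by
  rw [pp, ← RatFunc.single_zpow, vv, HahnSeries.orderTop_single one_ne_zero]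

theorem pp_ne_zero : pp K ≠ 0 := HahnSeries.single_ne_zero one_ne_zero

theorem inP_pp_zpow (k : ℤ) : inP k (pp K ^ k) := (vv_pp_zpow k).symm.le

theorem exists_inPQ_inP_sub (hx : inP r x) (r' : ℤ) :
    ∃ c, inPQ r r' c ∧ inP r' (x - c) := by
  refine ⟨HahnSeries.truncLT r' x, ⟨?_, fun n hn => HahnSeries.coeff_truncLT_of_le hn x⟩, ?_⟩
  · rw [inP, vv, HahnSeries.le_orderTop_iff_forall] at hx ⊢
    intro n hn
    simp [hx n hn]
  · rw [inP, vv, HahnSeries.le_orderTop_iff_forall]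
    intro n hn
    simp [HahnSeries.coeff_truncLT_of_lt (WithTop.coe_lt_coe.mp hn)]

theorem exists_inPQ_inP_sub_mul (hx : inP r x) (hu : vv u = 0) (r' : ℤ) :
    ∃ c, inPQ r r' c ∧ inP r' (x - c * u) := by
  obtain ⟨c, hc, hxc⟩ := exists_inPQ_inP_sub
    (by simpa using hx.mul (inP_zero_of_vv_eq_zero (vv_inv_eq_zero hu))) r'
  refine ⟨c, hc, ?_⟩
  have hu₀ : u ≠ 0 := by
    rintro rfl
    simp [vv] at hu
  have h : x - c * u = (x * u⁻¹ - c) * u := by field_simp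
  simpa [h] using hxc.mul (inP_zero_of_vv_eq_zero hu)

variable {a s t : ℤ} {M N : Matrix (Fin 3) (Fin 3) (LaurentSeries K)} {c : LaurentSeries K}

theorem inIa.vv_det (hM : inIa a M) : vv M.det = 0 := by
  obtain ⟨-, h00, h11, h22, h01, h02, h12, h10, h20, h21⟩ := hM
  have hO : ∀ {p q}, vv (M p q) = 0 → inP 0 (M p q) := inP_zero_of_vv_eq_zero
  have h : M.det = M 0 0 * M 1 1 * M 2 2 + (M 0 1 * M 1 2 * M 2 0 + M 0 2 * M 1 0 * M 2 1
      - M 0 0 * M 1 2 * M 2 1 - M 0 1 * M 1 0 * M 2 2 - M 0 2 * M 1 1 * M 2 0) := by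
    rw [det_fin_three]; ring
  have hP : ∀ {r} {x : LaurentSeries K}, inP r x → 1 ≤ r → inP 1 x := inP.mono
  rw [h]
  refine vv_add_eq_zero (vv_mul_eq_zero (vv_mul_eq_zero h00 h11) h22) ?_
  refine ((((hP ((h01.mul h12).mul h20) ?_).add (hP ((h02.mul h10).mul h21) ?_)).sub
    (hP (((hO h00).mul h12).mul h21) ?_)).sub (hP ((h01.mul h10).mul (hO h22)) ?_)).sub
    (hP ((h02.mul (hO h11)).mul h20) ?_) <;> omega

theorem inConj_of_forall_inP (hN : ∀ p q, inP (![0, s, t] p - ![0, s, t] q) (N p q))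
    (hdet : vv N.det = 0) : inConj s t N := by
  set e : Fin 3 → ℤ := ![0, s, t]
  set D : Matrix (Fin 3) (Fin 3) (LaurentSeries K) := diagonal fun p => pp K ^ e p
  set D' : Matrix (Fin 3) (Fin 3) (LaurentSeries K) := diagonal fun p => pp K ^ (-e p)
  have hD : xst K s t = D := by
    rw [xst]
    congr 1
    funext p
    fin_cases p <;> simp [e]
  have hDD' : D * D' = 1 := by
    rw [diagonal_mul_diagonal, ← diagonal_one]
    congr 1
    funext p
    rw [← zpow_add₀ pp_ne_zero, add_neg_cancel, zpow_zero]
  refine ⟨D' * N * D, ⟨fun p q => ?_, ?_⟩, ?_⟩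
  · rw [mul_diagonal, diagonal_mul]
    exact (((inP_pp_zpow (-e p)).mul (hN p q)).mul (inP_pp_zpow (e q))).mono (by omega)
  · rwa [det_mul, det_mul, mul_comm, ← mul_assoc, ← det_mul, hDD', det_one, one_mul]
  · rw [hD, inv_eq_right_inv hDD']
    calc N = D * D' * N * (D * D') := by rw [hDD', one_mul, mul_one]
      _ = D * (D' * N * D) * D' := by simp only [mul_assoc]

theorem inConj_of_inIa (hsa : s ≤ a) (hat : a ≤ t) (hN : inIa a N)
    (h01 : inP (-s) (N 0 1)) (h20 : inP t (N 2 0)) (h21 : inP (t - s) (N 2 1)) :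
    inConj s t N := by
  refine inConj_of_forall_inP (fun p q => ?_) hN.vv_det
  obtain ⟨-, h00, h11, h22, -, h02, h12, h10, -, -⟩ := hN
  replace h00 := inP_zero_of_vv_eq_zero h00
  replace h11 := inP_zero_of_vv_eq_zero h11
  replace h22 := inP_zero_of_vv_eq_zero h22
  fin_cases p <;> fin_cases q <;>
    simp only [Fin.zero_eta, Fin.mk_one, Fin.reduceFinMk, Fin.isValue, cons_val, cons_val_zero,
      cons_val_one, sub_self, sub_zero, zero_sub] <;>
    exact inP.mono ‹_› (by omega)

theorem inIa.transvection_zero_one_mul (hM : inIa a M) (hc : inP (-a) c) :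
    inIa a (transvection 0 1 c * M) := by
  obtain ⟨hdet, h00, h11, h22, h01, h02, h12, h10, h20, h21⟩ := hM
  simp only [inIa, det_mul, det_transvection_of_ne, one_mul, transvection_mul_apply_same,
    transvection_mul_apply_of_ne, ne_eq, Fin.reduceEq, not_false_eq_true]
  exact ⟨hdet, vv_add_eq_zero h00 ((hc.mul h10).mono (by omega)), h11, h22,
    h01.add ((hc.mul (inP_zero_of_vv_eq_zero h11)).mono (by omega)),
    h02.add ((hc.mul h12).mono (by omega)), h12, h10, h20, h21⟩

theorem inIa.transvection_two_zero_mul (hM : inIa a M) (hc : inP (a + 1) c) :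
    inIa a (transvection 2 0 c * M) := by
  obtain ⟨hdet, h00, h11, h22, h01, h02, h12, h10, h20, h21⟩ := hM
  simp only [inIa, det_mul, det_transvection_of_ne, one_mul, transvection_mul_apply_same,
    transvection_mul_apply_of_ne, ne_eq, Fin.reduceEq, not_false_eq_true]
  exact ⟨hdet, h00, h11, vv_add_eq_zero h22 ((hc.mul h02).mono (by omega)), h01, h02, h12, h10,
    h20.add ((hc.mul (inP_zero_of_vv_eq_zero h00)).mono (by omega)),
    h21.add ((hc.mul h01).mono (by omega))⟩

theorem inIa.transvection_two_one_mul (hM : inIa a M) (hc : inP 1 c) :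
    inIa a (transvection 2 1 c * M) := by
  obtain ⟨hdet, h00, h11, h22, h01, h02, h12, h10, h20, h21⟩ := hM
  simp only [inIa, det_mul, det_transvection_of_ne, one_mul, transvection_mul_apply_same,
    transvection_mul_apply_of_ne, ne_eq, Fin.reduceEq, not_false_eq_true]
  exact ⟨hdet, h00, h11, vv_add_eq_zero h22 ((hc.mul h12).mono (by omega)), h01, h02, h12, h10,
    h20.add ((hc.mul h10).mono (by omega)),
    h21.add ((hc.mul (inP_zero_of_vv_eq_zero h11)).mono (by omega))⟩

theorem inIa.exists_row_two_reduction (hM : inIa a M) (h01 : inP (-s) (M 0 1)) (hsa : s ≤ a)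
    (t : ℤ) : ∃ y z, inPQ (a + 1) t y ∧ inPQ 1 (t - s) z ∧
      inP t (M 2 0 - y * M 0 0 - z * M 1 0) ∧ inP (t - s) (M 2 1 - y * M 0 1 - z * M 1 1) := by
  obtain ⟨-, h00, h11, -, -, -, -, h10, h20, h21⟩ := hM
  set d := M 0 0 * M 1 1 - M 0 1 * M 1 0 with hd_def
  have hd : vv d = 0 := vv_sub_eq_zero (vv_mul_eq_zero h00 h11) ((h01.mul h10).mono (by omega))
  have hd₀ : d ≠ 0 := by
    intro h
    simp [h, vv] at hd
  have hdinv := inP_zero_of_vv_eq_zero (vv_inv_eq_zero hd)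
  replace h00 := inP_zero_of_vv_eq_zero h00
  replace h11 := inP_zero_of_vv_eq_zero h11
  set y₀ := (M 2 0 * M 1 1 - M 2 1 * M 1 0) * d⁻¹
  set z₀ := (M 2 1 * M 0 0 - M 2 0 * M 0 1) * d⁻¹
  have cramer : M 2 0 = y₀ * M 0 0 + z₀ * M 1 0 ∧ M 2 1 = y₀ * M 0 1 + z₀ * M 1 1 := by
    constructor <;> simp only [y₀, z₀] <;> field_simp <;> rw [hd_def] <;> ring
  have hy₀ : inP (a + 1) y₀ := by
    have hnum : inP (a + 1) (M 2 0 * M 1 1 - M 2 1 * M 1 0) :=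
      ((h20.mul h11).mono (by omega)).sub ((h21.mul h10).mono (by omega))
    simpa using hnum.mul hdinv
  have hz₀ : inP 1 z₀ := by
    have hnum : inP 1 (M 2 1 * M 0 0 - M 2 0 * M 0 1) :=
      ((h21.mul h00).mono (by omega)).sub ((h20.mul h01).mono (by omega))
    simpa using hnum.mul hdinv
  obtain ⟨y, hy, hyy₀⟩ := exists_inPQ_inP_sub hy₀ t
  obtain ⟨z, hz, hzz₀⟩ := exists_inPQ_inP_sub hz₀ (t - s)
  refine ⟨y, z, hy, hz, ?_, ?_⟩
  · rw [show M 2 0 - y * M 0 0 - z * M 1 0 = (y₀ - y) * M 0 0 + (z₀ - z) * M 1 0 by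
      linear_combination cramer.1]
    exact ((hyy₀.mul h00).mono (by omega)).add ((hzz₀.mul h10).mono (by omega))
  · rw [show M 2 1 - y * M 0 1 - z * M 1 1 = (y₀ - y) * M 0 1 + (z₀ - z) * M 1 1 by
      linear_combination cramer.2]
    exact ((hyy₀.mul h01).mono (by omega)).add ((hzz₀.mul h11).mono (by omega))

theorem unipotent_eq_transvection_mul {R : Type*} [CommRing R] (i y z : R) :
    !![1, i, 0; 0, 1, 0; y, z, 1] =
      transvection 0 1 i * transvection 2 0 y * transvection 2 1 z := by
  ext p q
  fin_cases p <;> fin_cases q <;> simp [transvection, mul_apply, Fin.sum_univ_three, single_apply]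

theorem transvection_mul_transvection_neg_mul {n R : Type*} [Fintype n] [DecidableEq n]
    [CommRing R] {i j : n} (h : i ≠ j) (c : R) (X : Matrix n n R) :
    transvection i j c * (transvection i j (-c) * X) = X := by
  rw [← mul_assoc, transvection_mul_transvection_same i j h, add_neg_cancel, transvection_zero,
    one_mul]

end

theorem stmt1_general (K : Type*) [Field K] (s t a : ℤ) (hsa : s < a) (hat : a < t)
    (M : Matrix (Fin 3) (Fin 3) (LaurentSeries K)) (hM : inIa a M) :
    ∃ (i y z : LaurentSeries K) (N : Matrix (Fin 3) (Fin 3) (LaurentSeries K)),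
      inPQ (-a) (-s) i ∧ inPQ (a + 1) t y ∧ inPQ 1 (t - s) z ∧
      inIa a N ∧ inConj s t N ∧
      M = !![1, i, 0; 0, 1, 0; y, z, 1] * N := by
  obtain ⟨i, hi, hi01⟩ := exists_inPQ_inP_sub_mul (hM.2.2.2.2.1 : inP (-a) (M 0 1))
    (hM.2.2.1 : vv (M 1 1) = 0) (-s)
  set M₁ := Matrix.transvection 0 1 (-i) * M
  have hM₁ : inIa a M₁ := hM.transvection_zero_one_mul hi.1.neg
  have h01 : inP (-s) (M₁ 0 1) := by simpa [M₁, neg_mul, ← sub_eq_add_neg] using hi01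
  obtain ⟨y, z, hy, hz, h20, h21⟩ := hM₁.exists_row_two_reduction h01 hsa.le t
  set N := Matrix.transvection 2 1 (-z) * (Matrix.transvection 2 0 (-y) * M₁)
  have hN : inIa a N :=
    (hM₁.transvection_two_zero_mul hy.1.neg).transvection_two_one_mul hz.1.neg
  refine ⟨i, y, z, N, hi, hy, hz, hN, inConj_of_inIa hsa.le hat.le hN ?_ ?_ ?_, ?_⟩
  · simpa [N] using h01
  · simpa [N, neg_mul, ← sub_eq_add_neg] using h20
  · simpa [N, neg_mul, ← sub_eq_add_neg] using h21
  · rw [unipotent_eq_transvection_mul, mul_assoc, mul_assoc]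
    repeat rw [transvection_mul_transvection_neg_mul (by decide)]

theorem stmt1 (K : Type*) [Field K] (s t a : ℤ) (ha : 0 ≤ a) (hsa : s < a) (hat : a < t)
    (M : Matrix (Fin 3) (Fin 3) (LaurentSeries K)) (hM : inIa a M) :
    ∃ (i y z : LaurentSeries K) (N : Matrix (Fin 3) (Fin 3) (LaurentSeries K)),
      inPQ (-a) (-s) i ∧ inPQ (a + 1) t y ∧ inPQ 1 (t - s) z ∧
      inIa a N ∧ inConj s t N ∧
      M = !![1, i, 0; 0, 1, 0; y, z, 1] * N :=
  stmt1_general K s t a hsa hat M hM
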